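/- If (W,S) is a Coxeter system of type Λ and α, β, γ are braid equivalent reduced expressions, then sigbar(α,β) ∩ sigbar(β,γ) ∩ sigbar(γ,α) = {x ∈ [α] : sig(x) = maj(α,β,γ)}. -/

import Mathlib

open scoped Classical

namespace Braid

variable {B : Type*}

/-- A Coxeter matrix is *simply laced* if all of its entries are 1, 2 or 3
(in particular, no entry is `0`, which encodes `m(s,t) = ∞`). -/
def SimplyLaced (M : CoxeterMatrix B) : Prop := ∀ s t : B, 1 ≤ M s t ∧ M s t ≤ 3

/-- The Coxeter graph has an edge between `s` and `t` iff `m(s,t) ≥ 3`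
(where the entry `0` encodes `∞`). -/
def CoxEdge (M : CoxeterMatrix B) (s t : B) : Prop := M s t = 0 ∨ 3 ≤ M s t

/-- A Coxeter matrix is *triangle free* if its Coxeter graph contains no three-cycles. -/
def TriangleFree (M : CoxeterMatrix B) : Prop :=
  ∀ s t u : B, ¬ (CoxEdge M s t ∧ CoxEdge M t u ∧ CoxEdge M s u)

/-- A Coxeter system is of *type Λ* if it is simply laced and triangle free. -/
def TypeLambda (M : CoxeterMatrix B) : Prop := SimplyLaced M ∧ TriangleFree M

/-- `y` is obtained from `x` by replacing the factor `s t s` occupying the (0-based)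
positions `p, p+1, p+2` by `t s t`, where `m(s,t) = 3`. -/
def BraidMoveAt (M : CoxeterMatrix B) (x y : List B) (p : ℕ) : Prop :=
  ∃ s t : B, M s t = 3 ∧
    x = x.take p ++ [s, t, s] ++ x.drop (p + 3) ∧
    y = x.take p ++ [t, s, t] ++ x.drop (p + 3)

/-- `x` and `y` differ by a single braid move (applied to `x`). -/
def BraidMove (M : CoxeterMatrix B) (x y : List B) : Prop := ∃ p, BraidMoveAt M x y p

/-- Two words are *braid equivalent* if one is obtained from the other
by a sequence of braid moves. -/
def BraidEquiv (M : CoxeterMatrix B) : List B → List B → Prop :=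
  Relation.ReflTransGen (BraidMove M)

/-- The braid class of `α`. -/
def braidClass (M : CoxeterMatrix B) (α : List B) : Set (List B) := {x | BraidEquiv M α x}

/-- The braid graph of `α`: vertices are the members of the braid class of `α`, with two
vertices adjacent iff they differ by a single braid move. -/
def braidGraph (M : CoxeterMatrix B) (α : List B) : SimpleGraph (braidClass M α) :=
  SimpleGraph.fromRel (fun x y => BraidMove M x.1 y.1)

/-- `c` is the (1-based) center of a braid shadow of `β`; that is, the interval of 1-based
positions `⟦c-1, c+1⟧` is a braid shadow of `β`. -/
def ShadowCenter (M : CoxeterMatrix B) (β : List B) (c : ℕ) : Prop :=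
  2 ≤ c ∧ ∃ s t : B, M s t = 3 ∧ β = β.take (c - 2) ++ [s, t, s] ++ β.drop (c + 1)

/-- The set of (1-based) centers of the braid shadows of the braid class `[α]`. -/
def classCenters (M : CoxeterMatrix B) (α : List B) : Set ℕ :=
  {c | ∃ β ∈ braidClass M α, ShadowCenter M β c}

/-- The dimension of `α`: the number of braid shadows of `[α]`. -/
noncomputable def braidDim (M : CoxeterMatrix B) (α : List B) : ℕ :=
  (classCenters M α).ncard

/-- The (1-based) center of the `i`-th braid shadow of `[α]`, the braid shadows being
numbered `1, …, braidDim M α` from left to right. -/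
noncomputable def nthCenter (M : CoxeterMatrix B) (α : List B) (i : ℕ) : ℕ :=
  Nat.nth (· ∈ classCenters M α) (i - 1)

/-- The `i`-th entry of the signature of `x ∈ [α]`: the letter of `x` appearing in the
center of the `i`-th braid shadow of `[α]`. -/
noncomputable def sig (M : CoxeterMatrix B) (α x : List B) (i : ℕ) : Option B :=
  x[nthCenter M α i - 1]?

/-- `sigbar M α x i` is the set of members of `[α]` whose signature agrees with that of `x`
in position `i`. -/
noncomputable def sigbar (M : CoxeterMatrix B) (α x : List B) (i : ℕ) :
    Set (braidClass M α) :=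
  {y | sig M α y.1 i = sig M α x i}

/-- `x` and `y` differ by a single braid move occurring in the `j`-th braid shadow
of `[α]` (i.e. the edge `{x,y}` of the braid graph is labeled by `j`). -/
noncomputable def EdgeLabeled (M : CoxeterMatrix B) (α x y : List B) (j : ℕ) : Prop :=
  1 ≤ j ∧ j ≤ braidDim M α ∧
    (BraidMoveAt M x y (nthCenter M α j - 2) ∨ BraidMoveAt M y x (nthCenter M α j - 2))

/-- `x` and `y` differ by a single braid move occurring in the braid shadow with
(1-based) center `c`. -/
def MoveAtCenter (M : CoxeterMatrix B) (x y : List B) (c : ℕ) : Prop :=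
  BraidMoveAt M x y (c - 2) ∨ BraidMoveAt M y x (c - 2)

/-- `BraidSeq M α js x y` : the list `js` of braid-shadow numbers records a braid sequence
transforming `x` into `y`, each move being applied in the indicated braid shadow of `[α]`. -/
noncomputable def BraidSeq (M : CoxeterMatrix B) (α : List B) :
    List ℕ → List B → List B → Prop
  | [], x, y => x = y
  | j :: js, x, y => ∃ z, EdgeLabeled M α x z j ∧ BraidSeq M α js z y

/-- A braid sequence from `x` to `y` is *minimal* if no shorter braid sequence from `x`
to `y` exists. -/
noncomputable def MinimalBraidSeq (M : CoxeterMatrix B) (α : List B)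
    (js : List ℕ) (x y : List B) : Prop :=
  BraidSeq M α js x y ∧ ∀ ls : List ℕ, BraidSeq M α ls x y → js.length ≤ ls.length

/-- `Δ(sig(α), sig(β))`: the number of positions at which the signatures of `α` and `β`
differ. -/
noncomputable def sigDelta (M : CoxeterMatrix B) (α β : List B) : ℕ :=
  {i | 1 ≤ i ∧ i ≤ braidDim M α ∧ sig M α α i ≠ sig M α β i}.ncard

/-- A reduced expression is a *link* if it has length 1, or it has odd length `m` and the
braid shadows of its braid class are exactly `⟦1,3⟧, ⟦3,5⟧, …, ⟦m-2,m⟧`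
(equivalently, the shadow centers are exactly the even numbers `2, 4, …, m-1`). -/
def IsLink (M : CoxeterMatrix B) (α : List B) : Prop :=
  1 ≤ α.length ∧
    (α.length = 1 ∨ (Odd α.length ∧
      classCenters M α = {c | Even c ∧ 2 ≤ c ∧ c + 1 ≤ α.length}))

/-- `maj M α β γ i`: the majority among the `i`-th signature entries of `α`, `β`, `γ`. -/
noncomputable def maj (M : CoxeterMatrix B) (α β γ : List B) (i : ℕ) : Option B :=
  if sig M α α i = sig M α β i ∨ sig M α α i = sig M α γ i then sig M α α i
  else sig M α β i

/-- `sigbarPair M α x y`: the set of members of `[α]` whose signature agrees with the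
common signature entries of `x` and `y`. -/
noncomputable def sigbarPair (M : CoxeterMatrix B) (α x y : List B) :
    Set (braidClass M α) :=
  {z | ∀ i : ℕ, 1 ≤ i → i ≤ braidDim M α →
    sig M α x i = sig M α y i → sig M α z.1 i = sig M α x i}

/-! ### Graph-theoretic notions -/

/-- A set `U` of vertices of a graph is *convex* if every vertex on every geodesic
(shortest path) between two vertices of `U` belongs to `U`. -/
def GraphConvex {V : Type*} (G : SimpleGraph V) (U : Set V) : Prop :=
  ∀ u ∈ U, ∀ v ∈ U, ∀ p : G.Walk u v, p.length = G.dist u v → ∀ x ∈ p.support, x ∈ U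

/-- The interval `I(u,v)`: the set of vertices lying on some geodesic between `u` and `v`. -/
def interval {V : Type*} (G : SimpleGraph V) (u v : V) : Set V :=
  {x | ∃ p : G.Walk u v, p.length = G.dist u v ∧ x ∈ p.support}

/-- A connected graph is *median* if any three vertices admit a unique median. -/
def IsMedianGraph {V : Type*} (G : SimpleGraph V) : Prop :=
  G.Connected ∧ ∀ u v w : V,
    ∃! x, x ∈ interval G u v ∩ interval G u w ∩ interval G v w

/-- The hypercube of dimension `n`: vertices are binary strings of length `n`, adjacent
iff they differ in exactly one digit. -/
def hypercube (n : ℕ) : SimpleGraph (Fin n → Bool) :=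
  SimpleGraph.fromRel (fun x y => ∃! i, x i ≠ y i)

/-- A graph is a *partial cube* if it admits an isometric embedding into some hypercube. -/
def IsPartialCube {V : Type*} (G : SimpleGraph V) : Prop :=
  ∃ (n : ℕ) (f : V → Fin n → Bool),
    ∀ u v : V, (hypercube n).dist (f u) (f v) = G.dist u v

/-- The isometric dimension of a graph: the minimal dimension of a hypercube into which it
isometrically embeds. -/
noncomputable def isoDim {V : Type*} (G : SimpleGraph V) : ℕ :=
  sInf {n | ∃ f : V → Fin n → Bool,
    ∀ u v : V, (hypercube n).dist (f u) (f v) = G.dist u v}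

/-- The semicube `W_{uv}` : the set of vertices strictly closer to `u` than to `v`. -/
def semicube {V : Type*} (G : SimpleGraph V) (u v : V) : Set V :=
  {w | G.dist w u < G.dist w v}

/-!
In type Λ every word of a braid class carries, at the center of each braid shadow of the class,
one of the two letters `s`, `t` of a factor `s t s` seen there. So at every shadow two of the
three signature entries of `α`, `β`, `γ` agree, and lying in the three sets `sigbarPair` says
exactly that the signature is the entrywise majority.

The two-letter property is proved along braid paths. First, no class has braid shadows with
adjacent centers: in a shortest counterexample no move touches the two positions the shadows
share, so the first word cut off there and completed by the end of the last word is still in the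
class, yet it contains the factor `x q x q`, which is not reduced. Hence the letter at a center
only changes by moves at that center, which swap it with its neighbour. It remains to see that
a neighbour joined to the center in the Coxeter graph is again one of the two letters; this is
where triangle-freeness enters, and keeping it under moves at the next shadow to the right
requires tracking that shadow too (`CenterInvariant`).
-/

section Words

lemma getElem?_splice (z u : List B) {p n : ℕ} (hp : p ≤ z.length) (hu : u.length = n)
    (i : ℕ) :
    (z.take p ++ u ++ z.drop (p + n))[i]? = if p ≤ i ∧ i < p + n then u[i - p]? else z[i]? := by
  subst hu
  have htake : (z.take p).length = p := by simp [hp]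
  split_ifs with h
  · rw [List.getElem?_append_left (by simp [htake]; omega),
      List.getElem?_append_right (by omega), htake]
  · rcases Nat.lt_or_ge i p with hi | hi
    · rw [List.getElem?_append_left (by simp [htake]; omega),
        List.getElem?_append_left (by omega), List.getElem?_take_of_lt hi]
    · rw [List.getElem?_append_right (by simp [htake]; omega), List.getElem?_drop]
      simp only [List.length_append, htake]
      congr 1
      omega

lemma getElem?_take_append_drop (u v : List B) {n : ℕ} (hn : n ≤ u.length) (i : ℕ) :
    (u.take n ++ v.drop n)[i]? = if i < n then u[i]? else v[i]? := by
  have htake : (u.take n).length = n := by simp [hn]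
  split_ifs with hi
  · rw [List.getElem?_append_left (by omega), List.getElem?_take_of_lt hi]
  · rw [List.getElem?_append_right (by omega), List.getElem?_drop, htake]
    congr 1
    omega

variable {M : CoxeterMatrix B} {z z' : List B} {p : ℕ} {x q : B}

structure IsBraidFactor (M : CoxeterMatrix B) (z : List B) (p : ℕ) (x q : B) : Prop where
  coxeter : M x q = 3
  get0 : z[p]? = some x
  get1 : z[p + 1]? = some q
  get2 : z[p + 2]? = some x

structure IsBraidStep (M : CoxeterMatrix B) (z z' : List B) (p : ℕ) (x q : B) : Prop where
  src : IsBraidFactor M z p x q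
  tgt : IsBraidFactor M z' p q x
  length_eq : z'.length = z.length
  getElem?_eq : ∀ i, i < p ∨ p + 3 ≤ i → z'[i]? = z[i]?

lemma IsBraidFactor.add_three_le_length (h : IsBraidFactor M z p x q) : p + 3 ≤ z.length := by
  have := (List.getElem?_eq_some_iff.1 h.get2).1
  omega

lemma IsBraidFactor.getElem?_eq (h : IsBraidFactor M z p x q) {i : ℕ}
    (hi : p ≤ i ∧ i < p + 3) : z[i]? = [x, q, x][i - p]? := by
  obtain rfl | rfl | rfl : i = p ∨ i = p + 1 ∨ i = p + 2 := by omega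
  exacts [by simpa using h.get0, by simpa using h.get1, by simpa using h.get2]

lemma IsBraidFactor.congr {b : ℕ} (h : IsBraidFactor M z b x q)
    (hzz : ∀ i, b ≤ i → i < b + 3 → z'[i]? = z[i]?) : IsBraidFactor M z' b x q := by
  refine ⟨h.coxeter, ?_, ?_, ?_⟩ <;> rw [hzz _ (by omega) (by omega)]
  exacts [h.get0, h.get1, h.get2]

lemma IsBraidStep.symm (h : IsBraidStep M z z' p x q) : IsBraidStep M z' z p q x :=
  ⟨h.tgt, h.src, h.length_eq.symm, fun i hi => (h.getElem?_eq i hi).symm⟩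

lemma braidMoveAt_iff : BraidMoveAt M z z' p ↔ ∃ x q, IsBraidStep M z z' p x q := by
  constructor
  · rintro ⟨x, q, hxq, hz, hz'⟩
    have hlen : p + 3 ≤ z.length := by
      have := congrArg List.length hz
      simp only [List.length_append, List.length_take, List.length_drop, List.length_cons,
        List.length_nil] at this
      omega
    have hzi i := (congrArg (·[i]?) hz).trans
      (getElem?_splice z [x, q, x] (n := 3) (by omega) rfl i)
    have hz'i i := (congrArg (·[i]?) hz').trans
      (getElem?_splice z [q, x, q] (n := 3) (by omega) rfl i)
    refine ⟨x, q, ⟨hxq, ?_, ?_, ?_⟩, ⟨M.symmetric x q ▸ hxq, ?_, ?_, ?_⟩, ?_,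
      fun i hi => ?_⟩
    any_goals (first | rw [hzi] | rw [hz'i]); simp
    · rw [hz']
      simp only [List.length_append, List.length_take, List.length_cons, List.length_drop,
        List.length_nil]
      omega
    · rw [hz'i, hzi, if_neg (by omega), if_neg (by omega)]
  · rintro ⟨x, q, h⟩
    have hlen := h.src.add_three_le_length
    refine ⟨x, q, h.src.coxeter, List.ext_getElem? fun i => ?_, List.ext_getElem? fun i => ?_⟩
      <;> rw [getElem?_splice z _ (n := 3) (by omega) rfl]
      <;> split_ifs with hi
    exacts [h.src.getElem?_eq hi, rfl, h.tgt.getElem?_eq hi, h.getElem?_eq i (by omega)]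

lemma braidMove_iff : BraidMove M z z' ↔ ∃ p x q, IsBraidStep M z z' p x q := by
  simp only [BraidMove, braidMoveAt_iff]

lemma IsBraidStep.take_append_drop {v v' : List B} (h : IsBraidStep M v v' p x q) (u : List B)
    {n : ℕ} (hnp : n ≤ p) (hn : n ≤ u.length) :
    IsBraidStep M (u.take n ++ v.drop n) (u.take n ++ v'.drop n) p x q := by
  have hget (v₀ : List B) (i : ℕ) (hi : n ≤ i) :
      (u.take n ++ v₀.drop n)[i]? = v₀[i]? := by
    rw [getElem?_take_append_drop u v₀ hn, if_neg (by omega)]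
  refine ⟨h.src.congr fun i _ _ => hget v i (by omega),
    h.tgt.congr fun i _ _ => hget v' i (by omega), by simp [h.length_eq], fun i hi => ?_⟩
  rw [getElem?_take_append_drop u _ hn, getElem?_take_append_drop u _ hn]
  split_ifs
  exacts [rfl, h.getElem?_eq i hi]

end Words

section Reduced

variable {W : Type*} [Group W] {M : CoxeterMatrix B} (cs : CoxeterSystem M W)

lemma wordProd_braid {x q : B} (h : M x q = 3) :
    cs.wordProd [x, q, x] = cs.wordProd [q, x, q] := by
  have := cs.wordProd_braidWord_eq q x
  rwa [CoxeterSystem.braidWord, CoxeterSystem.braidWord, M.symmetric q x, h] at this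

lemma BraidMove.isReduced_iff {z z' : List B} (h : BraidMove M z z') :
    cs.IsReduced z' ↔ cs.IsReduced z := by
  obtain ⟨p, x, q, hxq, hz, hz'⟩ := h
  generalize z.take p = l, z.drop (p + 3) = r at hz hz'
  subst hz hz'
  simp only [CoxeterSystem.IsReduced, CoxeterSystem.wordProd_append, wordProd_braid cs hxq,
    List.length_append, List.length_cons]

lemma BraidEquiv.isReduced {u z : List B} (h : BraidEquiv M u z) (hu : cs.IsReduced u) :
    cs.IsReduced z := by
  induction h with
  | refl => exact hu
  | tail _ hmove ih => exact (hmove.isReduced_iff cs).2 ih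

lemma not_isReduced_of_getElem? {z u : List B} {i : ℕ} (hu : ¬ cs.IsReduced u)
    (h : ∀ j < u.length, z[i + j]? = u[j]?) : ¬ cs.IsReduced z := by
  intro hz
  have hinfix : (z.drop i).take u.length = u := List.ext_getElem? fun j => by
    rw [List.getElem?_take]
    split_ifs with hj
    · rw [List.getElem?_drop, h j hj]
    · rw [List.getElem?_eq_none (by omega)]
  exact hu (hinfix ▸ (hz.drop i).take u.length)

lemma not_isReduced_of_getElem?_succ {z : List B} {i : ℕ} {b : B} (h0 : z[i]? = some b)
    (h1 : z[i + 1]? = some b) : ¬ cs.IsReduced z := by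
  refine not_isReduced_of_getElem? cs (i := i) (cs.not_isReduced_alternatingWord b b (m := 2)
    (by simp) (by simp)) fun j hj => ?_
  obtain rfl | rfl : j = 0 ∨ j = 1 := by simp [CoxeterSystem.length_alternatingWord] at hj; omega
  exacts [h0, h1]

lemma IsBraidFactor.not_isReduced_of_succ {z : List B} {a : ℕ} {x q y r : B}
    (h : IsBraidFactor M z a x q) (h' : IsBraidFactor M z (a + 1) y r) : ¬ cs.IsReduced z := by
  refine not_isReduced_of_getElem? cs (i := a) (cs.not_isReduced_alternatingWord x q (m := 4)
    (by simp [h.coxeter]) (by simp [h.coxeter])) fun j hj => ?_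
  have h3 : z[a + 3]? = some q := by
    rw [← h.get1]; exact h'.get2.trans h'.get0.symm
  obtain rfl | rfl | rfl | rfl : j = 0 ∨ j = 1 ∨ j = 2 ∨ j = 3 := by
    simp [CoxeterSystem.length_alternatingWord] at hj; omega
  exacts [h.get0, h.get1, h.get2, h3]

end Reduced

section Paths

variable {M : CoxeterMatrix B}

def IsBraidPath (M : CoxeterMatrix B) (k : ℕ) (w : ℕ → List B) : Prop :=
  ∀ t < k, ∃ p x q, IsBraidStep M (w t) (w (t + 1)) p x q

variable {k : ℕ} {w : ℕ → List B}

lemma IsBraidPath.segment (hw : IsBraidPath M k w) {s t : ℕ} (hst : s ≤ t) (htk : t ≤ k) :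
    IsBraidPath M (t - s) (fun i => w (s + i)) := fun i hi => by
  simpa only [Nat.add_assoc] using hw (s + i) (by omega)

lemma IsBraidPath.reverse (hw : IsBraidPath M k w) :
    IsBraidPath M k (fun i => w (k - i)) := fun t ht => by
  obtain ⟨p, x, q, h⟩ := hw (k - (t + 1)) (by omega)
  rw [show k - (t + 1) + 1 = k - t by omega] at h
  exact ⟨p, q, x, h.symm⟩

lemma IsBraidPath.braidEquiv (hw : IsBraidPath M k w) {t : ℕ} (ht : t ≤ k) :
    BraidEquiv M (w 0) (w t) := by
  induction t with
  | zero => exact .refl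
  | succ t ih => exact (ih (by omega)).tail (braidMove_iff.2 (hw t (by omega)))

lemma BraidEquiv.exists_isBraidPath {u z : List B} (h : BraidEquiv M u z) :
    ∃ k w, IsBraidPath M k w ∧ w 0 = u ∧ w k = z := by
  induction h with
  | refl => exact ⟨0, fun _ => u, fun _ ht => absurd ht (Nat.not_lt_zero _), rfl, rfl⟩
  | @tail v z _ hmove ih =>
    obtain ⟨k, w, hw, h0, hk⟩ := ih
    refine ⟨k + 1, fun i => if i ≤ k then w i else z, fun t ht => ?_, by simp [h0], by simp⟩
    rcases Nat.lt_or_ge t k with htk | htk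
    · simpa [htk.le, Nat.succ_le_of_lt htk] using hw t htk
    · obtain rfl : t = k := by omega
      simpa [hk] using braidMove_iff.1 hmove

lemma IsBraidPath.getElem?_eq_of_avoid (hw : IsBraidPath M k w) {i : ℕ}
    (havoid : ∀ t < k, ∀ p x q, IsBraidStep M (w t) (w (t + 1)) p x q →
      i < p ∨ p + 3 ≤ i) :
    (w k)[i]? = (w 0)[i]? := by
  induction k with
  | zero => rfl
  | succ k ih =>
    obtain ⟨p, x, q, h⟩ := hw k (by omega)
    rw [h.getElem?_eq i (havoid k (by omega) p x q h)]
    exact ih (fun t ht => hw t (by omega)) fun t ht => havoid t (by omega)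

lemma IsBraidPath.braidEquiv_take_append_drop (hw : IsBraidPath M k w) {n : ℕ}
    (hn : n ≤ (w 0).length)
    (hsplit : ∀ t < k, ∀ p x q, IsBraidStep M (w t) (w (t + 1)) p x q →
      p + 3 ≤ n ∨ n ≤ p) :
    BraidEquiv M (w 0) ((w 0).take n ++ (w k).drop n) := by
  induction k with
  | zero => rw [List.take_append_drop]; exact .refl
  | succ k ih =>
    have ih := ih (fun t ht => hw t (by omega)) fun t ht => hsplit t (by omega)
    obtain ⟨p, x, q, h⟩ := hw k (by omega)
    rcases hsplit k (by omega) p x q h with hleft | hright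
    · convert ih using 2
      exact List.ext_getElem? fun i => by
        rw [List.getElem?_drop, List.getElem?_drop, h.getElem?_eq _ (by omega)]
    · exact ih.tail (braidMove_iff.2 ⟨p, x, q, h.take_append_drop (w 0) hright hn⟩)

lemma BraidEquiv.symm {u z : List B} (h : BraidEquiv M u z) : BraidEquiv M z u := by
  obtain ⟨k, w, hw, rfl, rfl⟩ := h.exists_isBraidPath
  simpa using hw.reverse.braidEquiv (le_refl k)

end Paths

section AdjacentFactors

variable {W : Type*} [Group W] {M : CoxeterMatrix B} (cs : CoxeterSystem M W)

lemma IsBraidPath.not_isBraidFactor_succ_of_avoid {k : ℕ} {w : ℕ → List B}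
    (hw : IsBraidPath M k w) (hred : cs.IsReduced (w 0)) {a : ℕ} {x q y r : B}
    (h0 : IsBraidFactor M (w 0) a x q)
    (havoid : ∀ t < k, ∀ p s s', IsBraidStep M (w t) (w (t + 1)) p s s' →
      p + 2 ≤ a ∨ a + 3 ≤ p) :
    ¬ IsBraidFactor M (w k) (a + 1) y r := by
  intro hk
  have hconst : (w k)[a + 1]? = (w 0)[a + 1]? :=
    hw.getElem?_eq_of_avoid fun t ht p s s' h => by have := havoid t ht p s s' h; omega
  have hlen := h0.add_three_le_length
  set Z := (w 0).take (a + 3) ++ (w k).drop (a + 3)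
  have hZ (i : ℕ) : Z[i]? = if i < a + 3 then (w 0)[i]? else (w k)[i]? :=
    getElem?_take_append_drop _ _ hlen i
  have hZred : cs.IsReduced Z :=
    (hw.braidEquiv_take_append_drop hlen fun t ht p s s' h => by
      have := havoid t ht p s s' h; omega).isReduced cs hred
  have hZ0 : IsBraidFactor M Z a x q := by
    refine ⟨h0.coxeter, ?_, ?_, ?_⟩ <;> rw [hZ, if_pos (by omega)]
    exacts [h0.get0, h0.get1, h0.get2]
  have hZ3 : Z[a + 3]? = some q := by
    rw [hZ, if_neg (by omega), ← h0.get1, ← hconst]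
    exact hk.get2.trans hk.get0.symm
  exact hZ0.not_isReduced_of_succ cs
    ⟨M.symmetric x q ▸ h0.coxeter, hZ0.get1, hZ0.get2, hZ3⟩ hZred

theorem IsBraidPath.not_isBraidFactor_succ {k : ℕ} {w : ℕ → List B}
    (hw : IsBraidPath M k w) (hred : cs.IsReduced (w 0)) {a : ℕ} {x q y r : B}
    (h0 : IsBraidFactor M (w 0) a x q) : ¬ IsBraidFactor M (w k) (a + 1) y r := by
  induction k using Nat.strong_induction_on generalizing w a x q y r with
  | _ k IH =>
  have hred_at {t : ℕ} (ht : t ≤ k) : cs.IsReduced (w t) := (hw.braidEquiv ht).isReduced cs hred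
  have shorter {s t b : ℕ} {x' q' y' r' : B} (hs : s ≤ k) (ht : t ≤ k)
      (hst : t - s + (s - t) < k) (hb : IsBraidFactor M (w s) b x' q')
      (hb' : IsBraidFactor M (w t) (b + 1) y' r') : False := by
    rcases le_total s t with hle | hle
    · exact IH (t - s) (by omega) (hw.segment hle ht) (by simpa using hred_at hs)
        (by simpa using hb) (by simpa [Nat.add_sub_cancel' hle] using hb')
    · exact IH (s - t) (by omega) (hw.segment hle hs).reverse
        (by simpa [Nat.add_sub_cancel' hle] using hred_at hs)
        (by simpa [Nat.add_sub_cancel' hle] using hb) (by simpa using hb')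
  intro hk
  -- a move overlapping positions `a + 1`, `a + 2` yields a shorter path between adjacent factors
  refine hw.not_isBraidFactor_succ_of_avoid cs hred h0 (fun t ht p s s' h => ?_) hk
  by_contra hp
  obtain rfl | rfl | rfl | rfl : p + 1 = a ∨ p = a ∨ p = a + 1 ∨ p = a + 2 := by omega
  · exact shorter ht.le (Nat.zero_le _) (by omega) h.src h0
  · exact shorter ht (le_refl k) (by omega) h.tgt hk
  · exact shorter (Nat.zero_le _) ht.le (by omega) h0 h.src
  · exact shorter (le_refl k) ht (by omega) hk h.tgt

theorem not_isBraidFactor_succ_of_braidEquiv {u v z : List B} (hu : cs.IsReduced u)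
    (hv : BraidEquiv M u v) (hz : BraidEquiv M u z) {a : ℕ} {x q y r : B}
    (h : IsBraidFactor M v a x q) : ¬ IsBraidFactor M z (a + 1) y r := by
  obtain ⟨k, w, hw, hw0, hwk⟩ := BraidEquiv.exists_isBraidPath (hv.symm.trans hz)
  subst hw0 hwk
  exact hw.not_isBraidFactor_succ cs (hv.isReduced cs hu) h

end AdjacentFactors

section TwoLetters

variable {W : Type*} [Group W] {M : CoxeterMatrix B} (cs : CoxeterSystem M W)

lemma TriangleFree.ne_three (hM : TriangleFree M) {a b c : B} (hab : M a b = 3)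
    (hbc : M b c = 3) : M a c ≠ 3 := fun hac =>
  hM a b c ⟨.inr hab.ge, .inr hbc.ge, .inr hac.ge⟩

/-- `u` has the factor `x q x` at `a`, so `a + 1` is the center of its shadow, and `z` runs
through the class of `u`. Only the right neighbour of the center needs tracking, since a move at
the center reads a factor with equal outer letters. A letter other than `x`, `q` is called
foreign. -/
structure CenterInvariant (M : CoxeterMatrix B) (u : List B) (a : ℕ) (x q : B) (z : List B) :
    Prop where
  center : z[a + 1]? = some x ∨ z[a + 1]? = some q
  right_of_center : ∀ h f, z[a + 1]? = some h → z[a + 2]? = some f → M h f = 3 →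
    f = x ∨ f = q
  factor_right : ∀ y r, IsBraidFactor M z (a + 2) y r → (y = x ∨ y = q) ∨ (r = x ∨ r = q)
  right_of_foreign : ∀ f g, z[a + 2]? = some f → ¬ (f = x ∨ f = q) → z[a + 3]? = some g →
    M f g = 3 → g = x ∨ g = q
  foreign_right : ∀ f, z[a + 2]? = some f → ¬ (f = x ∨ f = q) →
    ∃ v, BraidEquiv M u v ∧ ∃ y r, IsBraidFactor M v (a + 2) y r

variable {u z z' : List B} {a p : ℕ} {x q s t : B}

lemma IsBraidFactor.centerInvariant (h : IsBraidFactor M u a x q) :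
    CenterInvariant M u a x q u where
  center := .inr h.get1
  right_of_center _ _ _ hf _ := .inl (Option.some.inj (hf.symm.trans h.get2))
  factor_right _ _ hf := .inl (.inl (Option.some.inj (hf.get0.symm.trans h.get2)))
  right_of_foreign _ _ hf hfx := (hfx (.inl (Option.some.inj (hf.symm.trans h.get2)))).elim
  foreign_right _ hf hfx := (hfx (.inl (Option.some.inj (hf.symm.trans h.get2)))).elim

lemma CenterInvariant.eq_or_eq_of_center (hinv : CenterInvariant M u a x q z) {h : B}
    (hh : z[a + 1]? = some h) : h = x ∨ h = q :=
  hinv.center.imp (fun e => Option.some.inj (hh.symm.trans e))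
    (fun e => Option.some.inj (hh.symm.trans e))

lemma CenterInvariant.center_step (hu : cs.IsReduced u) (h0 : IsBraidFactor M u a x q)
    (hz : BraidEquiv M u z) (hinv : CenterInvariant M u a x q z)
    (hstep : IsBraidStep M z z' p s t) : z'[a + 1]? = some x ∨ z'[a + 1]? = some q := by
  obtain hfar | rfl | rfl | rfl :
      (p + 2 ≤ a ∨ a + 2 ≤ p) ∨ p + 1 = a ∨ p = a ∨ p = a + 1 := by omega
  · rw [hstep.getElem?_eq _ (by omega)]
    exact hinv.center
  · exact (not_isBraidFactor_succ_of_braidEquiv cs hu hz .refl hstep.src h0).elim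
  · rw [hstep.tgt.get1]
    exact (hinv.right_of_center t s hstep.src.get1 hstep.src.get2
      (M.symmetric s t ▸ hstep.src.coxeter)).imp (congrArg some) (congrArg some)
  · exact (not_isBraidFactor_succ_of_braidEquiv cs hu .refl hz h0 hstep.src).elim

lemma CenterInvariant.right_of_center_step (hM : TriangleFree M) (hu : cs.IsReduced u)
    (h0 : IsBraidFactor M u a x q) (hz : BraidEquiv M u z) (hinv : CenterInvariant M u a x q z)
    (hstep : IsBraidStep M z z' p s t) (h f : B) (hh : z'[a + 1]? = some h)
    (hf : z'[a + 2]? = some f) (hhf : M h f = 3) : f = x ∨ f = q := by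
  obtain hfar | rfl | rfl | rfl | rfl :
      (p + 2 ≤ a ∨ a + 3 ≤ p) ∨ p + 1 = a ∨ p = a ∨ p = a + 1 ∨ p = a + 2 := by omega
  · rw [hstep.getElem?_eq _ (by omega)] at hh hf
    exact hinv.right_of_center h f hh hf hhf
  · exact (not_isBraidFactor_succ_of_braidEquiv cs hu hz .refl hstep.src h0).elim
  · obtain rfl : f = t := Option.some.inj (hf.symm.trans hstep.tgt.get2)
    exact hinv.eq_or_eq_of_center hstep.src.get1
  · exact (not_isBraidFactor_succ_of_braidEquiv cs hu .refl hz h0 hstep.src).elim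
  · obtain rfl : f = t := Option.some.inj (hf.symm.trans hstep.tgt.get0)
    rw [hstep.getElem?_eq _ (by omega)] at hh
    -- otherwise `h`, `s` are the two letters `x`, `q` and form a triangle with `f`
    have hs : ¬ (s = x ∨ s = q) := by
      intro hs
      have hsh : h ≠ s := by
        rintro rfl
        exact not_isReduced_of_getElem?_succ cs hh hstep.src.get0 (hz.isReduced cs hu)
      have hhs : M h s = 3 := by
        have hxq := h0.coxeter
        rcases hinv.eq_or_eq_of_center hh with rfl | rfl <;> rcases hs with rfl | rfl
        exacts [(hsh rfl).elim, hxq, M.symmetric h s ▸ hxq, (hsh rfl).elim]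
      exact hM.ne_three hhs hstep.src.coxeter hhf
    exact (hinv.factor_right s f hstep.src).resolve_left hs

lemma CenterInvariant.factor_right_step (hu : cs.IsReduced u) (h0 : IsBraidFactor M u a x q)
    (hz : BraidEquiv M u z) (hinv : CenterInvariant M u a x q z)
    (hstep : IsBraidStep M z z' p s t) (y r : B) (hf : IsBraidFactor M z' (a + 2) y r) :
    (y = x ∨ y = q) ∨ (r = x ∨ r = q) := by
  have hz' : BraidEquiv M u z' := hz.tail (braidMove_iff.2 ⟨p, s, t, hstep⟩)
  obtain hfar | rfl | rfl | rfl | rfl | rfl : (p + 2 ≤ a + 1 ∨ a + 5 ≤ p) ∨ p = a ∨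
      p = a + 1 ∨ p = a + 2 ∨ p = a + 3 ∨ p = a + 4 := by omega
  · exact hinv.factor_right y r
      (hf.congr fun i _ _ => (hstep.getElem?_eq i (by omega)).symm)
  · obtain rfl : y = t := Option.some.inj (hf.get0.symm.trans hstep.tgt.get2)
    exact .inl (hinv.eq_or_eq_of_center hstep.src.get1)
  · exact (not_isBraidFactor_succ_of_braidEquiv cs hu .refl hz h0 hstep.src).elim
  · obtain rfl : y = t := Option.some.inj (hf.get0.symm.trans hstep.tgt.get0)
    obtain rfl : r = s := Option.some.inj (hf.get1.symm.trans hstep.tgt.get1)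
    exact (hinv.factor_right r y hstep.src).symm
  · exact (not_isBraidFactor_succ_of_braidEquiv cs hu hz' hz' hf hstep.tgt).elim
  · refine or_iff_not_imp_left.2 fun hy => hinv.right_of_foreign y r ?_ hy ?_ hf.coxeter
    · exact (hstep.getElem?_eq _ (by omega)).symm.trans hf.get0
    · exact (hstep.getElem?_eq _ (by omega)).symm.trans hf.get1

lemma CenterInvariant.right_of_foreign_step (hu : cs.IsReduced u) (h0 : IsBraidFactor M u a x q)
    (hz : BraidEquiv M u z) (hinv : CenterInvariant M u a x q z)
    (hstep : IsBraidStep M z z' p s t) (f g : B) (hf : z'[a + 2]? = some f)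
    (hfx : ¬ (f = x ∨ f = q)) (hg : z'[a + 3]? = some g) (hfg : M f g = 3) :
    g = x ∨ g = q := by
  obtain hfar | rfl | rfl | rfl | rfl : (p + 2 ≤ a + 1 ∨ a + 4 ≤ p) ∨ p = a ∨
      p = a + 1 ∨ p = a + 2 ∨ p = a + 3 := by omega
  · rw [hstep.getElem?_eq _ (by omega)] at hf hg
    exact hinv.right_of_foreign f g hf hfx hg hfg
  · obtain rfl : f = t := Option.some.inj (hf.symm.trans hstep.tgt.get2)
    exact (hfx (hinv.eq_or_eq_of_center hstep.src.get1)).elim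
  · exact (not_isBraidFactor_succ_of_braidEquiv cs hu .refl hz h0 hstep.src).elim
  · obtain rfl : f = t := Option.some.inj (hf.symm.trans hstep.tgt.get0)
    obtain rfl : g = s := Option.some.inj (hg.symm.trans hstep.tgt.get1)
    exact (hinv.factor_right g f hstep.src).resolve_right hfx
  · rw [hstep.getElem?_eq _ (by omega)] at hf
    obtain ⟨v, hv, y, r, hvf⟩ := hinv.foreign_right f hf hfx
    exact (not_isBraidFactor_succ_of_braidEquiv cs hu hv hz hvf hstep.src).elim

lemma CenterInvariant.foreign_right_step (hu : cs.IsReduced u) (h0 : IsBraidFactor M u a x q)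
    (hz : BraidEquiv M u z) (hinv : CenterInvariant M u a x q z)
    (hstep : IsBraidStep M z z' p s t) (f : B) (hf : z'[a + 2]? = some f)
    (hfx : ¬ (f = x ∨ f = q)) :
    ∃ v, BraidEquiv M u v ∧ ∃ y r, IsBraidFactor M v (a + 2) y r := by
  obtain hfar | rfl | rfl | rfl :
      (p + 2 ≤ a + 1 ∨ a + 3 ≤ p) ∨ p = a ∨ p = a + 1 ∨ p = a + 2 := by omega
  · rw [hstep.getElem?_eq _ (by omega)] at hf
    exact hinv.foreign_right f hf hfx
  · obtain rfl : f = t := Option.some.inj (hf.symm.trans hstep.tgt.get2)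
    exact (hfx (hinv.eq_or_eq_of_center hstep.src.get1)).elim
  · exact (not_isBraidFactor_succ_of_braidEquiv cs hu .refl hz h0 hstep.src).elim
  · exact ⟨z, hz, s, t, hstep.src⟩

lemma CenterInvariant.step (hM : TriangleFree M) (hu : cs.IsReduced u)
    (h0 : IsBraidFactor M u a x q) (hz : BraidEquiv M u z) (hinv : CenterInvariant M u a x q z)
    (hstep : IsBraidStep M z z' p s t) : CenterInvariant M u a x q z' where
  center := hinv.center_step cs hu h0 hz hstep
  right_of_center := hinv.right_of_center_step cs hM hu h0 hz hstep
  factor_right := hinv.factor_right_step cs hu h0 hz hstep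
  right_of_foreign := hinv.right_of_foreign_step cs hu h0 hz hstep
  foreign_right := hinv.foreign_right_step cs hu h0 hz hstep

theorem BraidEquiv.centerInvariant (hM : TriangleFree M) (hu : cs.IsReduced u)
    (h0 : IsBraidFactor M u a x q) (hz : BraidEquiv M u z) : CenterInvariant M u a x q z := by
  induction hz with
  | refl => exact h0.centerInvariant
  | tail hz hmove ih =>
    obtain ⟨p, s, t, hstep⟩ := braidMove_iff.1 hmove
    exact ih.step cs hM hu h0 hz hstep

end TwoLetters

section Signature

variable {W : Type*} [Group W] {M : CoxeterMatrix B} (cs : CoxeterSystem M W)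

lemma BraidEquiv.length_eq {u z : List B} (h : BraidEquiv M u z) : z.length = u.length := by
  induction h with
  | refl => rfl
  | tail _ hmove ih =>
    obtain ⟨p, s, t, hstep⟩ := braidMove_iff.1 hmove
    exact hstep.length_eq.trans ih

lemma ShadowCenter.isBraidFactor {β : List B} {c : ℕ} (h : ShadowCenter M β c) :
    2 ≤ c ∧ ∃ s t, IsBraidFactor M β (c - 2) s t := by
  obtain ⟨hc, s, t, hst, hβ⟩ := h
  rw [show c + 1 = c - 2 + 3 by omega] at hβ
  obtain ⟨x, q, hstep⟩ := braidMoveAt_iff.1 ⟨s, t, hst, hβ, rfl⟩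
  exact ⟨hc, x, q, hstep.src⟩

lemma classCenters_finite (α : List B) : (classCenters M α).Finite :=
  (Set.finite_Iic α.length).subset fun c ⟨β, hβ, hc⟩ => by
    obtain ⟨hc2, s, t, hst⟩ := hc.isBraidFactor
    have := hst.add_three_le_length
    have := BraidEquiv.length_eq hβ
    simp only [Set.mem_Iic]
    omega

lemma nthCenter_mem_classCenters {α : List B} {i : ℕ} (hi : 1 ≤ i)
    (hid : i ≤ braidDim M α) : nthCenter M α i ∈ classCenters M α := by
  have hfin := classCenters_finite (M := M) α
  refine Nat.nth_mem_of_lt_card (p := (· ∈ classCenters M α)) hfin ?_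
  rw [braidDim, Set.ncard_eq_toFinset_card _ hfin] at hid
  exact lt_of_lt_of_le (by omega) hid

theorem exists_sig_eq_or_eq (hM : TriangleFree M) {α : List B} (hα : cs.IsReduced α) {i : ℕ}
    (hi : 1 ≤ i) (hid : i ≤ braidDim M α) :
    ∃ x q, ∀ z, BraidEquiv M α z → sig M α z i = some x ∨ sig M α z i = some q := by
  obtain ⟨β, hβ, hc⟩ := nthCenter_mem_classCenters hi hid
  obtain ⟨hc2, x, q, hfactor⟩ := hc.isBraidFactor
  refine ⟨x, q, fun z hz => ?_⟩
  have hinv :=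
    BraidEquiv.centerInvariant cs hM (hβ.isReduced cs hα) hfactor (hβ.symm.trans hz)
  rw [sig, show nthCenter M α i - 1 = nthCenter M α i - 2 + 1 by omega]
  exact hinv.center

end Signature

lemma eq_or_eq_or_eq_of_mem_pair {α : Type*} {x q a b c : α} (ha : a = x ∨ a = q)
    (hb : b = x ∨ b = q) (hc : c = x ∨ c = q) : a = b ∨ b = c ∨ c = a := by
  rcases ha with rfl | rfl <;> rcases hb with rfl | rfl <;> rcases hc with rfl | rfl <;> simp

lemma majority_iff {α : Type*} [DecidableEq α] {a b c z : α} (h : a = b ∨ b = c ∨ c = a) :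
    ((a = b → z = a) ∧ (b = c → z = b) ∧ (c = a → z = c)) ↔
      z = if a = b ∨ a = c then a else b := by
  rcases h with rfl | rfl | rfl <;> split_ifs <;> grind

theorem sigbarPair_triple_inter_eq_maj_general
    {B W : Type*} [Group W] (M : CoxeterMatrix B) (cs : CoxeterSystem M W)
    (hM : TypeLambda M) (α β γ : List B)
    (hα : cs.IsReduced α)
    (hβe : BraidEquiv M α β) (hγe : BraidEquiv M α γ) :
    sigbarPair M α α β ∩ sigbarPair M α β γ ∩ sigbarPair M α γ α =
      {x : braidClass M α | ∀ i : ℕ, 1 ≤ i → i ≤ braidDim M α →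
        sig M α x.1 i = maj M α β γ i} := by
  have hpair {i : ℕ} (hi : 1 ≤ i) (hid : i ≤ braidDim M α) :
      sig M α α i = sig M α β i ∨ sig M α β i = sig M α γ i ∨
        sig M α γ i = sig M α α i := by
    obtain ⟨x, q, hxq⟩ := exists_sig_eq_or_eq cs hM.2 hα hi hid
    exact eq_or_eq_or_eq_of_mem_pair (hxq α .refl) (hxq β hβe) (hxq γ hγe)
  ext z
  simp only [Set.mem_inter_iff, Set.mem_ofPred_eq, sigbarPair, maj]
  constructor
  · rintro ⟨⟨hαβ, hβγ⟩, hγα⟩ i hi hid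
    exact (majority_iff (hpair hi hid)).1 ⟨hαβ i hi hid, hβγ i hi hid, hγα i hi hid⟩
  · intro h
    exact ⟨⟨fun i hi hid => ((majority_iff (hpair hi hid)).2 (h i hi hid)).1,
      fun i hi hid => ((majority_iff (hpair hi hid)).2 (h i hi hid)).2.1⟩,
      fun i hi hid => ((majority_iff (hpair hi hid)).2 (h i hi hid)).2.2⟩

theorem sigbarPair_triple_inter_eq_maj
    {B W : Type*} [Group W] (M : CoxeterMatrix B) (cs : CoxeterSystem M W)
    (hM : TypeLambda M) (α β γ : List B)
    (hα : cs.IsReduced α) (hβ : cs.IsReduced β) (hγ : cs.IsReduced γ)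
    (hβe : BraidEquiv M α β) (hγe : BraidEquiv M α γ) :
    sigbarPair M α α β ∩ sigbarPair M α β γ ∩ sigbarPair M α γ α =
      {x : braidClass M α | ∀ i : ℕ, 1 ≤ i → i ≤ braidDim M α →
        sig M α x.1 i = maj M α β γ i} :=
  sigbarPair_triple_inter_eq_maj_general M cs hM α β γ hα hβe hγe

end Braid
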